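/- arXiv:1809.07125 — 2 statements merged into one kernel-verified Lean document; each statement's English description precedes it below -/
import Mathlib

section
/- Let Ω be a topological space equipped with its Borel σ-algebra and let M be a probability measure on Ω. Suppose that for every t > 0 there is a Markov (probability) kernel p_t from Ω to Ω such that: (i) for every point ω ∈ Ω and every open set U containing ω, one has 1 − p_t(ω)(U) = o(t) as t → 0⁺ (in particular p_t(ω)(U) > 0 for all sufficiently small t > 0); and (ii) for every ω ∈ Ω and every t > 0 the measure p_t(ω)(·) is absolutely continuous with respect to M. Then M(U) > 0 for every nonempty open subset U ⊆ Ω; that is, the topological support of M is the whole space Ω. -/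
open MeasureTheory Filter Asymptotics Topology

theorem Asymptotics.IsLittleO.tendsto_one_of_one_sub {α : Type*} {l : Filter α} {f g : α → ℝ}
    (h : (fun x => 1 - f x) =o[l] g) (hg : Tendsto g l (𝓝 0)) : Tendsto f l (𝓝 1) := by
  have hsub : Tendsto (fun x => 1 - f x) l (𝓝 0) := h.trans_tendsto hg
  simpa using (tendsto_const_nhds (x := (1 : ℝ))).sub hsub

theorem zMeasure_full_support_abstract_general
    {Ω : Type*} [TopologicalSpace Ω] [MeasurableSpace Ω]
    (M : Measure Ω)
    (p : ℝ → ProbabilityTheory.Kernel Ω Ω)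
    (hLittleO : ∀ (ω : Ω) (U : Set Ω), IsOpen U → ω ∈ U →
      (fun t : ℝ => 1 - (p t ω U).toReal) =o[nhdsWithin 0 (Set.Ioi 0)] (fun t : ℝ => t))
    (hAC : ∀ (ω : Ω) (t : ℝ), 0 < t → p t ω ≪ M) :
    ∀ U : Set Ω, IsOpen U → U.Nonempty → 0 < M U := by
  intro U hU ⟨ω, hω⟩
  have hp_tendsto : Tendsto (fun t => (p t ω U).toReal) (𝓝[>] 0) (𝓝 1) :=
    (hLittleO ω U hU hω).tendsto_one_of_one_sub (tendsto_id.mono_left nhdsWithin_le_nhds)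
  have hp_pos : ∀ᶠ t in 𝓝[>] 0, 0 < (p t ω U).toReal :=
    hp_tendsto.eventually (lt_mem_nhds one_pos)
  obtain ⟨t, htU, ht⟩ := (hp_pos.and self_mem_nhdsWithin).exists
  exact pos_iff_ne_zero.2 fun hMU => (ENNReal.toReal_pos_iff.1 htU).1.ne' (hAC ω t ht hMU)

/-- **Full topological support from a Markov transition function.**
If `M` is a Borel probability measure on a topological space `Ω`, and for each `t > 0`
there is a Markov kernel `p t` from `Ω` to `Ω` such that
(i) for every `ω` and every open `U ∋ ω` one has `1 - p t ω U = o(t)` as `t → 0⁺`, and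
(ii) `p t ω ≪ M` for all `ω` and `t > 0`,
then `M U > 0` for every nonempty open `U`, i.e. `M` has full topological support. -/
theorem zMeasure_full_support_abstract
    {Ω : Type*} [TopologicalSpace Ω] [MeasurableSpace Ω] [BorelSpace Ω]
    (M : Measure Ω) [IsProbabilityMeasure M]
    (p : ℝ → ProbabilityTheory.Kernel Ω Ω)
    (hMarkov : ∀ t : ℝ, 0 < t → ProbabilityTheory.IsMarkovKernel (p t))
    (hLittleO : ∀ (ω : Ω) (U : Set Ω), IsOpen U → ω ∈ U →
      (fun t : ℝ => 1 - (p t ω U).toReal) =o[nhdsWithin 0 (Set.Ioi 0)] (fun t : ℝ => t))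
    (hAC : ∀ (ω : Ω) (t : ℝ), 0 < t → p t ω ≪ M) :
    ∀ U : Set Ω, IsOpen U → U.Nonempty → 0 < M U :=
  zMeasure_full_support_abstract_general M p hLittleO hAC
end

section
/- Let z and z' be real numbers such that m < z < m+1 and m < z' < m+1 for some integer m. Then for every Young diagram λ with n boxes: (a) the product ∏_{(i,j)∈λ} (z + j − i)(z' + j − i) over the boxes (i,j) of λ is strictly positive; (b) zz' > 0, so the product ∏_{k=0}^{n−1} (zz' + k) is strictly positive; and hence (c) the quotient ∏_{(i,j)∈λ} (z + j − i)(z' + j − i) / ∏_{k=0}^{n−1} (zz' + k) is strictly positive. -/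
/-! For every cell the two factors `z + c` and `z' + c`, `c = j - i` its content, lie in the same
open unit interval `(m + c, m + c + 1)`, which contains no integer and hence not `0`; so they have
the same sign and their product is positive. The denominator is a rising factorial of `z z' > 0`. -/

section SameUnitInterval

variable {α : Type*} [Ring α] [LinearOrder α] [IsStrictOrderedRing α]

theorem mul_pos_of_mem_Ioo_int_add_one {a b : α} {k : ℤ}
    (ha : a ∈ Set.Ioo (k : α) (k + 1)) (hb : b ∈ Set.Ioo (k : α) (k + 1)) : 0 < a * b := by
  rcases le_or_gt 0 k with hk | hk
  · have hk' : (0 : α) ≤ k := by exact_mod_cast hk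
    exact mul_pos (hk'.trans_lt ha.1) (hk'.trans_lt hb.1)
  · have hk' : (k : α) + 1 ≤ 0 := by exact_mod_cast Int.add_one_le_iff.mpr hk
    exact mul_pos_of_neg_of_neg (ha.2.trans_le hk') (hb.2.trans_le hk')

theorem add_intCast_mem_Ioo_int_add_one {a : α} {k : ℤ} (ha : a ∈ Set.Ioo (k : α) (k + 1))
    (d : ℤ) : a + d ∈ Set.Ioo ((k + d : ℤ) : α) ((k + d : ℤ) + 1) := by
  push_cast
  exact ⟨add_lt_add_left ha.1 _, add_right_comm (k : α) d 1 ▸ add_lt_add_left ha.2 _⟩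

theorem add_intCast_mul_add_intCast_pos {a b : α} {k : ℤ}
    (ha : a ∈ Set.Ioo (k : α) (k + 1)) (hb : b ∈ Set.Ioo (k : α) (k + 1)) (d : ℤ) :
    0 < (a + d) * (b + d) :=
  mul_pos_of_mem_Ioo_int_add_one (add_intCast_mem_Ioo_int_add_one ha d)
    (add_intCast_mem_Ioo_int_add_one hb d)

end SameUnitInterval

theorem zMeasure_weight_pos_real_case_general
    (z z' : ℝ) (m : ℤ) (hz : (m : ℝ) < z ∧ z < m + 1) (hz' : (m : ℝ) < z' ∧ z' < m + 1)
    (lam : YoungDiagram) (n : ℕ) :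
    (0 < ∏ c ∈ lam.cells, ((z + (c.2 : ℝ) - (c.1 : ℝ)) * (z' + (c.2 : ℝ) - (c.1 : ℝ)))) ∧
    (0 < z * z' ∧ 0 < ∏ k ∈ Finset.range n, (z * z' + (k : ℝ))) ∧
    0 < (∏ c ∈ lam.cells, ((z + (c.2 : ℝ) - (c.1 : ℝ)) * (z' + (c.2 : ℝ) - (c.1 : ℝ)))) /
        (∏ k ∈ Finset.range n, (z * z' + (k : ℝ))) := by
  have hnum : 0 < ∏ c ∈ lam.cells,
      ((z + (c.2 : ℝ) - (c.1 : ℝ)) * (z' + (c.2 : ℝ) - (c.1 : ℝ))) := by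
    refine Finset.prod_pos fun c _ => ?_
    simpa only [Int.cast_sub, Int.cast_natCast, add_sub_assoc] using
      add_intCast_mul_add_intCast_pos hz hz' ((c.2 : ℤ) - c.1)
  have hzz : 0 < z * z' := mul_pos_of_mem_Ioo_int_add_one hz hz'
  have hden : 0 < ∏ k ∈ Finset.range n, (z * z' + (k : ℝ)) :=
    Finset.prod_pos fun k _ => by positivity
  exact ⟨hnum, ⟨hzz, hden⟩, div_pos hnum hden⟩

/-- Positivity of the z-measure weight numerator and denominator at `θ = 1`, in the
real ("principal") case `m < z, z' < m + 1` for an integer `m`: for every Young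
diagram `lam` (with `0`-based cells `(i, j)`, so the content of a cell is `j - i`) with
`n` boxes,
(a) `∏_{(i,j)∈λ} (z + j − i)(z' + j − i) > 0`;
(b) `z z' > 0` and `∏_{k=0}^{n−1} (z z' + k) > 0`;
(c) the quotient of the two products is strictly positive. -/
theorem zMeasure_weight_pos_real_case
    (z z' : ℝ) (m : ℤ) (hz : (m : ℝ) < z ∧ z < m + 1) (hz' : (m : ℝ) < z' ∧ z' < m + 1)
    (lam : YoungDiagram) (n : ℕ) (hn : n = lam.card) :
    (0 < ∏ c ∈ lam.cells, ((z + (c.2 : ℝ) - (c.1 : ℝ)) * (z' + (c.2 : ℝ) - (c.1 : ℝ)))) ∧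
    (0 < z * z' ∧ 0 < ∏ k ∈ Finset.range n, (z * z' + (k : ℝ))) ∧
    0 < (∏ c ∈ lam.cells, ((z + (c.2 : ℝ) - (c.1 : ℝ)) * (z' + (c.2 : ℝ) - (c.1 : ℝ)))) /
        (∏ k ∈ Finset.range n, (z * z' + (k : ℝ))) :=
  zMeasure_weight_pos_real_case_general z z' m hz hz' lam n
end
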